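/- arXiv:2405.07811 — 2 statements merged into one kernel-verified Lean document; each statement's English description precedes it below -/
import Mathlib

section
/- The diagonal Gram coefficients satisfy the asymptotics a_{m,m} ≈ (2πTm)^{−1/2} for large m; precisely, the sequence √(2πTm) · a_{m,m} tends to 1 as m → ∞. -/
open Real MeasureTheory Matrix Filter

/-- Physicists' Hermite polynomials: H_0 = 1, H_1 = 2x, H_{n+1} = 2x H_n - 2n H_{n-1}. -/
noncomputable def hermiteH : ℕ → ℝ → ℝ
  | 0, _ => 1
  | 1, x => 2 * x
  | (n + 2), x => 2 * x * hermiteH (n + 1) x - 2 * (n + 1) * hermiteH n x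

/-- Asymmetric Hermite basis function ψ_m. -/
noncomputable def psi (T : ℝ) (m : ℕ) (v : ℝ) : ℝ :=
  Real.exp (-v ^ 2 / T) * T ^ (-(1 : ℝ) / 2) *
    ((2 : ℝ) ^ m * (Nat.factorial m : ℝ) * Real.sqrt π) ^ (-(1 : ℝ) / 2) *
    hermiteH m (v / Real.sqrt T)

/-- Gram coefficient a_{m,n} = ∫ ψ_m ψ_n. -/
noncomputable def gramA (T : ℝ) (m n : ℕ) : ℝ := ∫ v : ℝ, psi T m v * psi T n v

/-! Write `ψ_m(v)²` as a multiple of `H_m(x)² e^{-2x²}` with `x = v / √T`. Since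
`(H_n e^{-x²})' = -H_{n+1} e^{-x²}` and the weight is `e^{-2x²} = (e^{-x²})²`, integration by
parts moves one index from one Hermite factor to the other at the cost of a sign:
`∫ H_{n+1} H_k e^{-2x²} = -∫ H_n H_{k+1} e^{-2x²}`. Hence
`∫ H_m² e^{-2x²} = (-1)^m ∫ H_{2m} e^{-2x²}`, and the three-term recurrence gives
`∫ H_{n+2} e^{-2x²} = -(n+1) ∫ H_n e^{-2x²}`. Altogether
`a_{m,m} = binom(2m, m) / (4^m √(2T))`, and Stirling's formula gives
`binom(2m, m) ~ 4^m / √(πm)`. -/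

open Polynomial
open scoped Nat

noncomputable def physHermite : ℕ → ℝ[X]
  | 0 => 1
  | 1 => C 2 * X
  | n + 2 => C 2 * X * physHermite (n + 1) - C (2 * ((n : ℝ) + 1)) * physHermite n

theorem eval_physHermite : ∀ (n : ℕ) (x : ℝ), (physHermite n).eval x = hermiteH n x
  | 0, x => by simp [physHermite, hermiteH]
  | 1, x => by simp [physHermite, hermiteH]
  | n + 2, x => by
    simp [physHermite, hermiteH, eval_physHermite (n + 1), eval_physHermite n]

theorem derivative_physHermite_succ :
    ∀ n : ℕ, derivative (physHermite (n + 1)) = C (2 * ((n : ℝ) + 1)) * physHermite n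
  | 0 => by simp [physHermite]
  | 1 => by
    simp only [physHermite, derivative_mul, derivative_sub, derivative_C, derivative_X,
      derivative_one]
    simp only [map_mul, map_add, map_natCast, map_one, map_ofNat]
    push_cast
    ring
  | n + 2 => by
    rw [physHermite, derivative_sub, derivative_mul, derivative_C_mul, derivative_C_mul,
      derivative_physHermite_succ (n + 1), derivative_physHermite_succ n, physHermite]
    simp only [derivative_X, map_mul, map_add, map_natCast, map_one, map_ofNat]
    push_cast
    ring

theorem physHermite_succ (n : ℕ) :
    physHermite (n + 1) = C 2 * X * physHermite n - derivative (physHermite n) := by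
  cases n with
  | zero => simp [physHermite]
  | succ n => rw [physHermite, derivative_physHermite_succ]

theorem integrable_eval_mul_exp_neg_mul_sq {b : ℝ} (hb : 0 < b) (p : ℝ[X]) :
    Integrable fun x : ℝ => p.eval x * exp (-b * x ^ 2) := by
  induction p using Polynomial.induction_on' with
  | add p q hp hq => simpa only [eval_add, add_mul, Pi.add_def] using hp.add hq
  | monomial n a =>
    have hn : (-1 : ℝ) < n := by linarith [n.cast_nonneg (α := ℝ)]
    simpa only [eval_monomial, mul_assoc, Real.rpow_natCast] using
      (integrable_rpow_mul_exp_neg_mul_sq hb hn).const_mul a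

theorem integral_derivative_eval_mul_exp_neg_mul_sq {b : ℝ} (hb : 0 < b) (p : ℝ[X]) :
    ∫ x, (derivative p).eval x * exp (-b * x ^ 2) =
      2 * b * ∫ x, (X * p).eval x * exp (-b * x ^ 2) := by
  have hint (q : ℝ[X]) := integrable_eval_mul_exp_neg_mul_sq hb q
  have hderiv (x : ℝ) : HasDerivAt (fun y => p.eval y * exp (-b * y ^ 2))
      ((derivative p).eval x * exp (-b * x ^ 2) -
        2 * b * ((X * p).eval x * exp (-b * x ^ 2))) x := by
    refine ((p.hasDerivAt x).mul ((hasDerivAt_pow 2 x).const_mul (-b)).exp).congr_deriv ?_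
    simp only [eval_mul, eval_X]
    ring
  have h := integral_eq_zero_of_hasDerivAt_of_integrable hderiv
    ((hint _).sub ((hint _).const_mul _)) (hint p)
  rwa [integral_sub (hint _) ((hint _).const_mul _), integral_const_mul, sub_eq_zero] at h

noncomputable def gaussIntegral : ℝ[X] →ₗ[ℝ] ℝ where
  toFun p := ∫ x, p.eval x * exp (-2 * x ^ 2)
  map_add' p q := by
    simp only [eval_add, add_mul]
    exact integral_add (integrable_eval_mul_exp_neg_mul_sq two_pos p)
      (integrable_eval_mul_exp_neg_mul_sq two_pos q)
  map_smul' c p := by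
    simp only [eval_smul, smul_eq_mul, mul_assoc, RingHom.id_apply]
    exact integral_const_mul c _

theorem gaussIntegral_apply (p : ℝ[X]) :
    gaussIntegral p = ∫ x, p.eval x * exp (-2 * x ^ 2) := rfl

theorem gaussIntegral_C_mul (c : ℝ) (p : ℝ[X]) :
    gaussIntegral (C c * p) = c * gaussIntegral p := by
  rw [C_mul', map_smul, smul_eq_mul]

theorem gaussIntegral_one : gaussIntegral 1 = √(π / 2) := by
  simpa [gaussIntegral_apply] using integral_gaussian 2

theorem gaussIntegral_derivative (p : ℝ[X]) :
    gaussIntegral (derivative p) = 4 * gaussIntegral (X * p) := by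
  rw [gaussIntegral_apply, integral_derivative_eval_mul_exp_neg_mul_sq two_pos]
  norm_num [gaussIntegral_apply]

theorem gaussIntegral_physHermite_succ_mul (n k : ℕ) :
    gaussIntegral (physHermite (n + 1) * physHermite k) =
      -gaussIntegral (physHermite n * physHermite (k + 1)) := by
  have key : physHermite (n + 1) * physHermite k + physHermite n * physHermite (k + 1) =
      C 2 * (C 2 * (X * (physHermite n * physHermite k))) -
        derivative (physHermite n * physHermite k) := by
    rw [physHermite_succ n, physHermite_succ k, derivative_mul]
    simp only [map_ofNat]
    ring
  have h := congrArg gaussIntegral key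
  rw [map_add, map_sub, gaussIntegral_C_mul, gaussIntegral_C_mul, gaussIntegral_derivative] at h
  linarith

theorem gaussIntegral_physHermite_mul (n k : ℕ) :
    gaussIntegral (physHermite n * physHermite k) =
      (-1) ^ n * gaussIntegral (physHermite (n + k)) := by
  induction n generalizing k with
  | zero => simp [physHermite]
  | succ n ih =>
    rw [gaussIntegral_physHermite_succ_mul, ih, pow_succ, add_right_comm, add_assoc]
    ring

theorem gaussIntegral_physHermite_add_two (n : ℕ) :
    gaussIntegral (physHermite (n + 2)) = -(n + 1) * gaussIntegral (physHermite n) := by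
  have hX : gaussIntegral (X * physHermite (n + 1)) =
      (n + 1) / 2 * gaussIntegral (physHermite n) := by
    have h := gaussIntegral_derivative (physHermite (n + 1))
    rw [derivative_physHermite_succ, gaussIntegral_C_mul] at h
    linarith
  rw [physHermite, map_sub, mul_assoc, gaussIntegral_C_mul, gaussIntegral_C_mul, hX]
  ring

theorem gaussIntegral_physHermite_two_mul (m : ℕ) :
    gaussIntegral (physHermite (2 * m)) =
      (-1) ^ m * (m ! * Nat.centralBinom m / 2 ^ m) * √(π / 2) := by
  induction m with
  | zero => simp [physHermite, gaussIntegral_one]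
  | succ m ih =>
    have hc : ((m + 1 : ℕ) : ℝ) * Nat.centralBinom (m + 1) =
        2 * (2 * m + 1) * Nat.centralBinom m := by
      exact_mod_cast Nat.succ_mul_centralBinom_succ m
    rw [mul_add_one, gaussIntegral_physHermite_add_two, ih, Nat.factorial_succ]
    push_cast at hc ⊢
    field_simp
    linear_combination (2 ^ m * (-1) ^ m : ℝ) * hc

theorem integral_hermiteH_sq_mul_exp (m : ℕ) :
    ∫ x, hermiteH m x ^ 2 * exp (-2 * x ^ 2) =
      m ! * Nat.centralBinom m / 2 ^ m * √(π / 2) := by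
  have h := gaussIntegral_physHermite_mul m m
  rw [← two_mul, gaussIntegral_physHermite_two_mul, ← mul_assoc, ← mul_assoc, ← pow_add,
    Even.neg_one_pow ⟨m, rfl⟩, one_mul] at h
  simpa only [gaussIntegral_apply, ← sq, eval_pow, eval_physHermite] using h

theorem rpow_neg_half_mul_self {x : ℝ} (hx : 0 ≤ x) :
    x ^ (-(1 : ℝ) / 2) * x ^ (-(1 : ℝ) / 2) = x⁻¹ := by
  rw [← Real.rpow_add' hx (by norm_num)]
  norm_num [Real.rpow_neg_one]

theorem psi_mul_self {T : ℝ} (hT : 0 < T) (m : ℕ) (v : ℝ) :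
    psi T m v * psi T m v = (T * (2 ^ m * m ! * √π))⁻¹ *
      (hermiteH m (v / √T) ^ 2 * exp (-2 * (v / √T) ^ 2)) := by
  have hexp : exp (-v ^ 2 / T) * exp (-v ^ 2 / T) = exp (-2 * (v / √T) ^ 2) := by
    rw [← exp_add, div_pow, sq_sqrt hT.le]
    ring_nf
  have hA : (0 : ℝ) ≤ 2 ^ m * m ! * √π := by positivity
  calc psi T m v * psi T m v
      = (exp (-v ^ 2 / T) * exp (-v ^ 2 / T)) * (T ^ (-(1 : ℝ) / 2) * T ^ (-(1 : ℝ) / 2)) *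
          ((2 ^ m * m ! * √π) ^ (-(1 : ℝ) / 2) * (2 ^ m * m ! * √π) ^ (-(1 : ℝ) / 2)) *
          hermiteH m (v / √T) ^ 2 := by unfold psi; ring
    _ = _ := by
      rw [hexp, rpow_neg_half_mul_self hT.le, rpow_neg_half_mul_self hA, mul_inv]
      ring

theorem gramA_diag_eq {T : ℝ} (hT : 0 < T) (m : ℕ) :
    gramA T m m = Nat.centralBinom m / (4 ^ m * √(2 * T)) := by
  have hsT : 0 < √T := sqrt_pos.mpr hT
  have hfact : (0 : ℝ) < m ! := by positivity
  rw [gramA]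
  simp_rw [psi_mul_self hT]
  rw [integral_const_mul,
    Measure.integral_comp_div (fun x => hermiteH m x ^ 2 * exp (-2 * x ^ 2)),
    integral_hermiteH_sq_mul_exp, abs_of_pos hsT, smul_eq_mul, sqrt_div' π two_pos.le,
    sqrt_mul two_pos.le, show (4 : ℝ) ^ m = 2 ^ m * 2 ^ m by rw [← mul_pow]; norm_num]
  nth_rewrite 1 [← mul_self_sqrt hT.le]
  field_simp

theorem sqrt_mul_centralBinom_div_four_pow_eq {n : ℕ} (hn : n ≠ 0) :
    √(π * n) * Nat.centralBinom n / 4 ^ n =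
      √π * (Stirling.stirlingSeq (2 * n) / Stirling.stirlingSeq n ^ 2) := by
  have hfact : ((2 * n)! : ℝ) = Nat.centralBinom n * (n ! * n !) := by
    rw [Nat.centralBinom_eq_two_mul_choose, ← mul_assoc,
      ← Nat.choose_mul_factorial_mul_factorial (by omega : n ≤ 2 * n),
      show 2 * n - n = n by omega]
    push_cast
    ring
  have hn' : (0 : ℝ) < n := by positivity
  have hsqrt : √(2 * ((2 * n : ℕ) : ℝ)) = 2 * √n := by
    rw [show 2 * ((2 * n : ℕ) : ℝ) = 2 ^ 2 * n by push_cast; ring, sqrt_mul (by positivity),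
      sqrt_sq two_pos.le]
  have hpow : ((2 * n : ℕ) / exp 1) ^ (2 * n) = (4 : ℝ) ^ n * ((n / exp 1) ^ n) ^ 2 := by
    push_cast
    rw [mul_div_assoc, mul_pow, pow_mul, pow_mul']
    norm_num
  have hfact' : (0 : ℝ) < n ! := by positivity
  simp only [Stirling.stirlingSeq, hfact, hsqrt, hpow, div_pow, mul_pow,
    sq_sqrt (by positivity : (0 : ℝ) ≤ 2 * n), sqrt_mul pi_pos.le]
  field_simp
  rw [sq_sqrt hn'.le]
  ring

theorem tendsto_sqrt_mul_centralBinom_div_four_pow :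
    Tendsto (fun n : ℕ => √(π * n) * Nat.centralBinom n / 4 ^ n) atTop (nhds 1) := by
  have hs := Stirling.tendsto_stirlingSeq_sqrt_pi
  have hlim := tendsto_const_nhds (x := √π).mul
    ((hs.comp (tendsto_id.const_mul_atTop' two_pos)).div (hs.pow 2) (by positivity))
  have hπ : √π ≠ 0 := (sqrt_pos.mpr pi_pos).ne'
  rw [show √π * (√π / √π ^ 2) = 1 by field_simp] at hlim
  refine hlim.congr' ?_
  filter_upwards [eventually_ne_atTop 0] with n hn
  exact (sqrt_mul_centralBinom_div_four_pow_eq hn).symm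

theorem gramA_diag_asymptotics (T : ℝ) (hT : 0 < T) :
    Filter.Tendsto (fun m : ℕ => Real.sqrt (2 * π * T * (m : ℝ)) * gramA T m m)
      Filter.atTop (nhds 1) := by
  refine tendsto_sqrt_mul_centralBinom_div_four_pow.congr fun m => ?_
  have hT2 : 0 < √(2 * T) := by positivity
  rw [gramA_diag_eq hT, show 2 * π * T * m = π * m * (2 * T) by ring,
    sqrt_mul (by positivity : 0 ≤ π * m) (2 * T)]
  field_simp
end

section
/- For all natural numbers m and n, the Gram coefficients satisfy the skew-symmetry relation √(m+1) · a_{m+1, n} + √(n+1) · a_{m, n+1} = 0. (This is the entrywise content of the identity A·D + Dᵀ·A = 0 between the infinite Gram matrix A = (a_{m,n}) and the infinite transport matrix D with entries d_{m,n} = −e·√(2m/T)·δ_{m−1,n}.) -/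
/-!
In the variable `x = v / √T`, the product `ψ_m ψ_n` is `e^{-2x²} H_m(x) H_n(x)` up to normalising
constants. The recurrence in the form `H_{k+1} = 2x H_k - H_k'` gives
`H_{m+1} H_n + H_m H_{n+1} = 4x H_m H_n - (H_m H_n)'`, so
`e^{-2x²} (H_{m+1} H_n + H_m H_{n+1}) = -(e^{-2x²} H_m H_n)'` integrates to zero over `ℝ`.
The normalising constants `c_k` satisfy `√(k+1) c_{k+1} = c_k / √2`, which turns this into the relation.
-/

open Real MeasureTheory Matrix Filter

open Polynomial

noncomputable def hermitePoly : ℕ → ℝ[X]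
  | 0 => 1
  | 1 => C 2 * X
  | (n + 2) => C 2 * X * hermitePoly (n + 1) - C (2 * ((n : ℝ) + 1)) * hermitePoly n

theorem hermitePoly_succ_succ (n : ℕ) :
    hermitePoly (n + 2) = C 2 * X * hermitePoly (n + 1) - C (2 * ((n : ℝ) + 1)) * hermitePoly n :=
  rfl

theorem derivative_hermitePoly_succ :
    ∀ n : ℕ, derivative (hermitePoly (n + 1)) = C (2 * ((n : ℝ) + 1)) * hermitePoly n
  | 0 => by simp [hermitePoly]
  | n + 1 => by
    have ih := derivative_hermitePoly_succ n
    rw [hermitePoly_succ_succ]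
    simp only [derivative_sub, derivative_mul, derivative_C, derivative_X, ih]
    cases n with
    | zero => simp [hermitePoly]; ring
    | succ k =>
      rw [derivative_hermitePoly_succ k, hermitePoly_succ_succ k]
      push_cast
      simp only [map_add, map_mul, map_one, map_ofNat, map_natCast]
      ring

theorem hermitePoly_succ (n : ℕ) :
    hermitePoly (n + 1) = C 2 * X * hermitePoly n - derivative (hermitePoly n) := by
  cases n with
  | zero => simp [hermitePoly]
  | succ k => rw [hermitePoly_succ_succ, derivative_hermitePoly_succ]

theorem hermiteH_eq_eval : ∀ (n : ℕ) (x : ℝ), hermiteH n x = (hermitePoly n).eval x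
  | 0, _ => by simp [hermiteH, hermitePoly]
  | 1, _ => by simp [hermiteH, hermitePoly]
  | n + 2, x => by
    rw [hermiteH, hermitePoly_succ_succ, hermiteH_eq_eval (n + 1), hermiteH_eq_eval n]
    simp

theorem integrable_exp_neg_mul_sq_mul_eval {b : ℝ} (hb : 0 < b) (p : ℝ[X]) :
    Integrable fun x : ℝ => exp (-b * x ^ 2) * p.eval x := by
  induction p using Polynomial.induction_on' with
  | add p q hp hq => simpa [mul_add, Pi.add_def] using hp.add hq
  | monomial n a =>
    have h := (integrable_rpow_mul_exp_neg_mul_sq hb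
      (by linarith [n.cast_nonneg (α := ℝ)] : (-1 : ℝ) < n)).const_mul a
    refine h.congr (Eventually.of_forall fun x => ?_)
    simp only [eval_monomial, rpow_natCast]
    ring

theorem hasDerivAt_exp_neg_mul_sq_mul_eval (b : ℝ) (p : ℝ[X]) (x : ℝ) :
    HasDerivAt (fun x : ℝ => exp (-b * x ^ 2) * p.eval x)
      (exp (-b * x ^ 2) * (derivative p - 2 * C b * X * p).eval x) x := by
  have hexp :
      HasDerivAt (fun x : ℝ => exp (-b * x ^ 2)) (exp (-b * x ^ 2) * (-b * (2 * x))) x := by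
    simpa using ((hasDerivAt_pow 2 x).const_mul (-b)).exp
  refine (hexp.mul (p.hasDerivAt x)).congr_deriv ?_
  simp only [eval_sub, eval_mul, eval_ofNat, eval_C, eval_X]
  ring

-- The integrand is the derivative of `exp (-b * x ^ 2) * p.eval x`.
theorem integral_exp_neg_mul_sq_mul_eval_derivative_sub {b : ℝ} (hb : 0 < b) (p : ℝ[X]) :
    ∫ x : ℝ, exp (-b * x ^ 2) * (derivative p - 2 * C b * X * p).eval x = 0 :=
  integral_eq_zero_of_hasDerivAt_of_integrable (hasDerivAt_exp_neg_mul_sq_mul_eval b p)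
    (integrable_exp_neg_mul_sq_mul_eval hb _) (integrable_exp_neg_mul_sq_mul_eval hb p)

noncomputable def hermiteGram (m n : ℕ) : ℝ :=
  ∫ x : ℝ, exp (-2 * x ^ 2) * (hermitePoly m * hermitePoly n).eval x

theorem hermiteGram_succ_left_add_succ_right (m n : ℕ) :
    hermiteGram (m + 1) n + hermiteGram m (n + 1) = 0 := by
  have hpoly : hermitePoly (m + 1) * hermitePoly n + hermitePoly m * hermitePoly (n + 1) =
      -(derivative (hermitePoly m * hermitePoly n) -
        2 * C 2 * X * (hermitePoly m * hermitePoly n)) := by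
    rw [hermitePoly_succ, hermitePoly_succ, derivative_mul]
    ring
  have hb : (0 : ℝ) < 2 := two_pos
  rw [hermiteGram, hermiteGram, ← integral_add (integrable_exp_neg_mul_sq_mul_eval hb _)
    (integrable_exp_neg_mul_sq_mul_eval hb _)]
  simp_rw [← mul_add, ← eval_add, hpoly, eval_neg, mul_neg, integral_neg,
    integral_exp_neg_mul_sq_mul_eval_derivative_sub hb, neg_zero]

noncomputable def hermiteNorm (k : ℕ) : ℝ :=
  ((2 : ℝ) ^ k * (Nat.factorial k : ℝ) * sqrt π) ^ (-(1 : ℝ) / 2)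

theorem rpow_neg_one_div_two {x : ℝ} (hx : 0 ≤ x) : x ^ (-(1 : ℝ) / 2) = (sqrt x)⁻¹ := by
  rw [neg_div, rpow_neg hx, sqrt_eq_rpow]

theorem sqrt_succ_mul_hermiteNorm_succ (k : ℕ) :
    sqrt ((k : ℝ) + 1) * hermiteNorm (k + 1) = (sqrt 2)⁻¹ * hermiteNorm k := by
  have hA : 0 < (2 : ℝ) ^ k * (Nat.factorial k : ℝ) * sqrt π := by
    positivity
  have hk : 0 < (k : ℝ) + 1 := by positivity
  have hsucc : (2 : ℝ) ^ (k + 1) * ((k + 1).factorial : ℝ) * sqrt π =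
      2 * ((k + 1) * (2 ^ k * (Nat.factorial k : ℝ) * sqrt π)) := by
    push_cast [Nat.factorial_succ]
    ring
  rw [hermiteNorm, hermiteNorm, hsucc, rpow_neg_one_div_two (by positivity),
    rpow_neg_one_div_two hA.le, sqrt_mul zero_le_two, sqrt_mul hk.le]
  field_simp

theorem psi_eq_hermiteNorm_mul (T : ℝ) (hT : 0 < T) (k : ℕ) (v : ℝ) :
    psi T k v = (sqrt T)⁻¹ * hermiteNorm k *
      (exp (-(v / sqrt T) ^ 2) * (hermitePoly k).eval (v / sqrt T)) := by
  rw [psi, hermiteH_eq_eval, rpow_neg_one_div_two hT.le, hermiteNorm, div_pow, sq_sqrt hT.le,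
    neg_div]
  ring

theorem gramA_eq_hermiteGram (T : ℝ) (hT : 0 < T) (m n : ℕ) :
    gramA T m n = (sqrt T)⁻¹ * hermiteNorm m * hermiteNorm n * hermiteGram m n := by
  have hs : 0 < sqrt T := sqrt_pos.mpr hT
  have hprod : ∀ v, psi T m v * psi T n v = ((sqrt T)⁻¹ ^ 2 * hermiteNorm m * hermiteNorm n) *
      (fun x => exp (-2 * x ^ 2) * (hermitePoly m * hermitePoly n).eval x) (v / sqrt T) := by
    intro v
    beta_reduce
    rw [psi_eq_hermiteNorm_mul T hT, psi_eq_hermiteNorm_mul T hT, eval_mul]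
    have hexp :
        exp (-(v / sqrt T) ^ 2) * exp (-(v / sqrt T) ^ 2) = exp (-2 * (v / sqrt T) ^ 2) := by
      rw [← exp_add]
      ring_nf
    linear_combination ((sqrt T)⁻¹ ^ 2 * hermiteNorm m * hermiteNorm n *
      (hermitePoly m).eval (v / sqrt T) * (hermitePoly n).eval (v / sqrt T)) * hexp
  rw [gramA]
  simp_rw [hprod]
  rw [integral_const_mul, Measure.integral_comp_div
    (fun x => exp (-2 * x ^ 2) * (hermitePoly m * hermitePoly n).eval x), abs_of_pos hs,
    smul_eq_mul, hermiteGram]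
  field_simp

theorem gramA_skew_relation (T : ℝ) (hT : 0 < T) (m n : ℕ) :
    Real.sqrt ((m : ℝ) + 1) * gramA T (m + 1) n +
      Real.sqrt ((n : ℝ) + 1) * gramA T m (n + 1) = 0 := by
  rw [gramA_eq_hermiteGram T hT, gramA_eq_hermiteGram T hT]
  linear_combination (sqrt T)⁻¹ * hermiteNorm n * hermiteGram (m + 1) n *
      sqrt_succ_mul_hermiteNorm_succ m +
    (sqrt T)⁻¹ * hermiteNorm m * hermiteGram m (n + 1) * sqrt_succ_mul_hermiteNorm_succ n +
    (sqrt T)⁻¹ * (sqrt 2)⁻¹ * hermiteNorm m * hermiteNorm n *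
      hermiteGram_succ_left_add_succ_right m n
end
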